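/- For every integer L ≥ 1, the random variable N̂⁰(L) has the same distribution as M_L := max_{0 ≤ l ≤ L} W_l, the maximum over {0,…,L} of a simple symmetric random walk started at 0; that is, P(N̂⁰(L) = n) = P(M_L = n) for every n ∈ ℕ. -/

import Mathlib

open MeasureTheory ProbabilityTheory Filter Real

noncomputable section

/-- The mass function of the Catalan distribution with parameter `ρ = 1/2 - δ`:
`P(X = n) = C_n ρ^n (1-ρ)^(n+1)`. -/
def catMass (ρ : ℝ) (n : ℕ) : ℝ := (catalan n : ℝ) * ρ ^ n * (1 - ρ) ^ (n + 1)

/-- An i.i.d. sequence `(X_i)` with the Catalan distribution of parameter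
`ρ = 1/2 - δ` on a probability space. -/
def IIDCat {Ω : Type} [MeasurableSpace Ω] (μ : MeasureTheory.Measure Ω) (δ : ℝ)
    (X : ℕ → Ω → ℕ) : Prop :=
  IsProbabilityMeasure μ ∧ (∀ i, Measurable (X i)) ∧
  iIndepFun X μ ∧
  ∀ i n, μ {ω | X i ω = n} = ENNReal.ofReal (catMass (1/2 - δ) n)

/-- `N̂(L)`: the number of renewal events in `{1, …, L}` for the renewal process with
a renewal at the origin and inter-arrival times `2 X_i + 1`, i.e. the number of `k ≥ 1`
with `S_k = Σ_{i=1}^k (2 X_i + 1) ≤ L` (indices relabelled from 0). -/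
def renCount {Ω : Type} (X : ℕ → Ω → ℕ) (L : ℕ) (ω : Ω) : ℕ :=
  Set.ncard {k : ℕ | 1 ≤ k ∧ ∑ i ∈ Finset.range k, (2 * X i ω + 1) ≤ L}


def cwFn (k : ℕ) : ℝ := if k % 2 = 1 then (catalan (k / 2) : ℝ) / 2 ^ k else 0

def cwS : PowerSeries ℝ := PowerSeries.mk cwFn

def gFn (n k : ℕ) : ℝ := PowerSeries.coeff k (cwS ^ n)

def RFn (L n : ℕ) : ℝ := ∑ k ∈ Finset.range (L + 1), gFn n k

lemma cwFn_nonneg (k : ℕ) : 0 ≤ cwFn k := by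
  unfold cwFn; split <;> positivity

lemma cwFn_odd (m : ℕ) : cwFn (2 * m + 1) = (catalan m : ℝ) / 2 ^ (2 * m + 1) := by
  have h2 : (2 * m + 1) / 2 = m := by omega
  simp [cwFn, Nat.mul_add_mod, h2]

lemma cwFn_even (k : ℕ) (h : k % 2 = 0) : cwFn k = 0 := by
  simp [cwFn, h]

lemma gFn_succ (n k : ℕ) :
    gFn (n + 1) k = ∑ j ∈ Finset.range (k + 1), gFn n j * cwFn (k - j) := by
  rw [gFn, pow_succ, PowerSeries.coeff_mul,
    Finset.Nat.sum_antidiagonal_eq_sum_range_succ_mk]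
  simp [gFn, cwS, PowerSeries.coeff_mk]

lemma gFn_zero_left (k : ℕ) : gFn 0 k = if k = 0 then 1 else 0 := by
  simp [gFn, PowerSeries.coeff_one]

lemma gFn_zero_right (n : ℕ) : gFn n 0 = if n = 0 then 1 else 0 := by
  have h0 : PowerSeries.constantCoeff cwS = 0 := by
    simp [cwS, PowerSeries.constantCoeff_mk, cwFn]
  rcases n with _ | n
  · simp [gFn, PowerSeries.coeff_one]
  · have : PowerSeries.constantCoeff (cwS ^ (n+1)) = 0 := by
      rw [map_pow, h0, zero_pow (Nat.succ_ne_zero n)]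
    simp only [gFn, ← PowerSeries.coeff_zero_eq_constantCoeff] at this ⊢
    simp [this]

lemma gFn_nonneg (n k : ℕ) : 0 ≤ gFn n k := by
  induction n generalizing k with
  | zero => rw [gFn_zero_left]; split <;> norm_num
  | succ n ih =>
    rw [gFn_succ]
    exact Finset.sum_nonneg fun j _ => mul_nonneg (ih j) (cwFn_nonneg _)

lemma coeff_sq (k : ℕ) :
    PowerSeries.coeff k (cwS ^ 2) = ∑ j ∈ Finset.range (k + 1), cwFn j * cwFn (k - j) := by
  rw [pow_two, PowerSeries.coeff_mul, Finset.Nat.sum_antidiagonal_eq_sum_range_succ_mk]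
  simp [cwS, PowerSeries.coeff_mk]

lemma key_coeff (k : ℕ) :
    2 * cwFn (k + 1) = (if k = 0 then 1 else 0) + ∑ j ∈ Finset.range (k + 1), cwFn j * cwFn (k - j) := by
  rcases Nat.even_or_odd k with hk | hk
  · obtain ⟨m, rfl⟩ := hk
    rcases m with _ | m'
    · norm_num [cwFn, catalan_zero]
    · have hfilter : (Finset.range (m' + 1 + (m' + 1) + 1)).filter (fun j => j % 2 = 1)
          = (Finset.range (m' + 1)).image (fun i => 2 * i + 1) := by
        ext j
        simp only [Finset.mem_filter, Finset.mem_range, Finset.mem_image]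
        constructor
        · rintro ⟨h1, h2⟩; exact ⟨j / 2, by omega, by omega⟩
        · rintro ⟨i, hi, rfl⟩; omega
      have hsum : ∑ j ∈ Finset.range (m' + 1 + (m' + 1) + 1), cwFn j * cwFn (m' + 1 + (m' + 1) - j)
          = ∑ i ∈ Finset.range (m' + 1), cwFn (2 * i + 1) * cwFn (m' + 1 + (m' + 1) - (2 * i + 1)) := by
        rw [← Finset.sum_filter_of_ne (p := fun j => j % 2 = 1), hfilter,
          Finset.sum_image (by intro a _ b _ h; have h' : 2 * a + 1 = 2 * b + 1 := h; omega)]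
        intro j hj hne
        by_contra h
        rw [cwFn_even j (by omega), zero_mul] at hne
        exact hne rfl
      rw [hsum]
      have hterm : ∀ i ∈ Finset.range (m' + 1),
          cwFn (2 * i + 1) * cwFn (m' + 1 + (m' + 1) - (2 * i + 1))
          = (catalan i : ℝ) * (catalan (m' - i)) / 2 ^ (m' + 1 + (m' + 1)) := by
        intro i hi
        rw [Finset.mem_range] at hi
        have h1 : m' + 1 + (m' + 1) - (2 * i + 1) = 2 * (m' - i) + 1 := by omega
        rw [h1, cwFn_odd, cwFn_odd]
        have h2 : (2:ℝ) ^ (2 * i + 1) * 2 ^ (2 * (m' - i) + 1) = 2 ^ (m' + 1 + (m' + 1)) := by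
          rw [← pow_add]; congr 1; omega
        rw [div_mul_div_comm, h2]
      rw [Finset.sum_congr rfl hterm, ← Finset.sum_div]
      have hcat : ∑ i ∈ Finset.range (m' + 1), (catalan i : ℝ) * (catalan (m' - i))
          = (catalan (m' + 1) : ℝ) := by
        rw [catalan_succ', Finset.Nat.sum_antidiagonal_eq_sum_range_succ_mk]
        push_cast
        rfl
      rw [hcat]
      have hodd : m' + 1 + (m' + 1) + 1 = 2 * (m' + 1) + 1 := by omega
      rw [if_neg (by omega), hodd, cwFn_odd]
      have h2 : (2:ℝ) ^ (2 * (m' + 1) + 1) = 2 ^ (m' + 1 + (m' + 1)) * 2 := by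
        rw [← pow_succ]; congr 1; omega
      rw [h2]
      field_simp
      ring
  · -- k odd : both sides zero
    obtain ⟨m, rfl⟩ := hk
    rw [cwFn_even (2 * m + 1 + 1) (by omega), if_neg (by omega)]
    rw [Finset.sum_eq_zero, mul_zero, zero_add]
    intro j hj
    rw [Finset.mem_range] at hj
    rcases Nat.even_or_odd j with hj2 | hj2
    · obtain ⟨a, rfl⟩ := hj2
      rw [cwFn_even (a + a) (by omega), zero_mul]
    · obtain ⟨a, rfl⟩ := hj2
      rw [cwFn_even (2 * m + 1 - (2 * a + 1)) (by omega), mul_zero]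

lemma keyF : (2 : ℝ) • cwS = PowerSeries.X + PowerSeries.X * cwS ^ 2 := by
  ext k
  rw [LinearMap.map_smul, smul_eq_mul, map_add, PowerSeries.coeff_X]
  rcases k with _ | k
  · simp only [cwS, PowerSeries.coeff_mk, PowerSeries.coeff_zero_eq_constantCoeff, map_mul,
      PowerSeries.constantCoeff_X, zero_mul]
    norm_num [cwFn]
  · rw [PowerSeries.coeff_succ_X_mul, coeff_sq]
    simp only [cwS, PowerSeries.coeff_mk]
    rw [key_coeff]
    by_cases h : k = 0 <;> simp [h]

lemma gstep (n k : ℕ) : 2 * gFn (n + 1) (k + 1) = gFn n k + gFn (n + 2) k := by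
  have h : (2 : ℝ) • cwS ^ (n + 1) = PowerSeries.X * cwS ^ n + PowerSeries.X * cwS ^ (n + 2) := by
    calc (2:ℝ) • cwS ^ (n+1) = ((2:ℝ) • cwS) * cwS ^ n := by
          rw [smul_mul_assoc, ← pow_succ']
      _ = PowerSeries.X * cwS ^ n + PowerSeries.X * cwS ^ (n + 2) := by
          rw [keyF, add_mul]; ring
  have := congrArg (PowerSeries.coeff (k + 1)) h
  rw [LinearMap.map_smul, smul_eq_mul, map_add, PowerSeries.coeff_succ_X_mul,
    PowerSeries.coeff_succ_X_mul] at this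
  exact this

lemma RFn_step (L n : ℕ) : 2 * RFn (L + 1) (n + 1) = RFn L n + RFn L (n + 2) := by
  unfold RFn
  rw [Finset.sum_range_succ' (fun k => gFn (n+1) k), gFn_zero_right, if_neg (Nat.succ_ne_zero n)]
  rw [add_zero, Finset.mul_sum]
  rw [← Finset.sum_add_distrib]
  exact Finset.sum_congr rfl fun k _ => gstep n k

lemma RFn_zero_right (L : ℕ) : RFn L 0 = 1 := by
  have h : ∀ k, gFn 0 k = if k = 0 then 1 else 0 := fun k => by
    simp [gFn, PowerSeries.coeff_one]
  simp [RFn, h]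
lemma RFn_zero_left (n : ℕ) : RFn 0 n = if n = 0 then 1 else 0 := by
  simp [RFn, gFn_zero_right]


lemma RFn_nonneg (L n : ℕ) : 0 ≤ RFn L n :=
  Finset.sum_nonneg fun k _ => gFn_nonneg n k

section LHS
variable {Ω : Type} [MeasurableSpace Ω] {μ : Measure Ω} {X : ℕ → Ω → ℕ}

lemma natSet_meas (s : Set ℕ) : MeasurableSet s := (Set.to_countable s).measurableSet

lemma intSet_meas (s : Set ℤ) : MeasurableSet s := (Set.to_countable s).measurableSet

lemma catMass_eq (j : ℕ) : catMass (1/2 - 0) j = cwFn (2 * j + 1) := by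
  rw [cwFn_odd, catMass]
  have h1 : (1:ℝ)/2 - 0 = 1/2 := by norm_num
  have h2 : (1:ℝ) - 1/2 = 1/2 := by norm_num
  have h3 : (2:ℝ) ^ j * 2 ^ (j + 1) = 2 ^ (2 * j + 1) := by
    rw [← pow_add]; congr 1; omega
  rw [h1, h2, div_pow, div_pow, one_pow, one_pow]
  rw [mul_one_div, mul_one_div, div_div, h3]

/-- The interarrival variables. -/
def Yfn (X : ℕ → Ω → ℕ) (i : ℕ) (ω : Ω) : ℕ := 2 * X i ω + 1

lemma Yfn_meas (hX : ∀ i, Measurable (X i)) (i : ℕ) : Measurable (Yfn X i) :=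
  (measurable_from_top (f := fun x : ℕ => 2 * x + 1)).comp (hX i)

lemma Yfn_dist (hprob : IsProbabilityMeasure μ)
    (hdist : ∀ i n, μ {ω | X i ω = n} = ENNReal.ofReal (catMass (1/2 - 0) n))
    (i m : ℕ) : μ {ω | Yfn X i ω = m} = ENNReal.ofReal (cwFn m) := by
  rcases Nat.even_or_odd m with hm | hm
  · obtain ⟨a, rfl⟩ := hm
    have : {ω | Yfn X i ω = a + a} = (∅ : Set Ω) := by
      ext ω; simp only [Set.mem_setOf_eq, Set.mem_empty_iff_false, iff_false]
      unfold Yfn; omega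
    rw [this, measure_empty, cwFn_even _ (by omega), ENNReal.ofReal_zero]
  · obtain ⟨a, rfl⟩ := hm
    have : {ω | Yfn X i ω = 2 * a + 1} = {ω | X i ω = a} := by
      ext ω; simp only [Set.mem_setOf_eq]; unfold Yfn; omega
    rw [this, hdist i a, catMass_eq]

/-- Partial sums. -/
def Sfn (X : ℕ → Ω → ℕ) (n : ℕ) (ω : Ω) : ℕ := ∑ i ∈ Finset.range n, (2 * X i ω + 1)

lemma Sfn_meas (hX : ∀ i, Measurable (X i)) (n : ℕ) : Measurable (Sfn X n) :=
  Finset.measurable_sum _ fun i _ => (measurable_from_top (f := fun x : ℕ => 2 * x + 1)).comp (hX i)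

lemma Sfn_dist (hprob : IsProbabilityMeasure μ) (hX : ∀ i, Measurable (X i))
    (hind : iIndepFun X μ)
    (hdist : ∀ i n, μ {ω | X i ω = n} = ENNReal.ofReal (catMass (1/2 - 0) n))
    (n k : ℕ) : μ {ω | Sfn X n ω = k} = ENNReal.ofReal (gFn n k) := by
  have hYmeas := Yfn_meas hX
  have hYind : iIndepFun (Yfn X) μ :=
    hind.comp (fun _ x => 2 * x + 1) (fun _ => measurable_from_top)
  have hYdist := Yfn_dist hprob hdist
  induction n generalizing k with
  | zero =>
    rcases Nat.eq_zero_or_pos k with rfl | hk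
    · have : {ω | Sfn X 0 ω = 0} = Set.univ := by
        ext ω; simp [Sfn]
      rw [this, measure_univ, gFn_zero_left]; simp
    · have : {ω | Sfn X 0 ω = k} = ∅ := by
        ext ω; simp [Sfn]; omega
      rw [this, measure_empty, gFn_zero_left, if_neg (by omega)]; simp
  | succ n ih =>
    have hindSY : IndepFun (∑ j ∈ Finset.range n, Yfn X j) (Yfn X n) μ :=
      hYind.indepFun_sum_range_succ hYmeas n
    have hSY : ∀ ω, Sfn X n ω = (∑ j ∈ Finset.range n, Yfn X j) ω := by
      intro ω; rw [Finset.sum_apply]; rfl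
    have hunion : {ω | Sfn X (n+1) ω = k}
        = ⋃ j ∈ Finset.range (k+1), ({ω | Sfn X n ω = j} ∩ {ω | Yfn X n ω = k - j}) := by
      ext ω
      simp only [Set.mem_setOf_eq, Set.mem_iUnion, Set.mem_inter_iff, Finset.mem_range]
      have hstep : Sfn X (n+1) ω = Sfn X n ω + Yfn X n ω := by
        unfold Sfn Yfn; rw [Finset.sum_range_succ]
      constructor
      · intro h
        exact ⟨Sfn X n ω, by omega, rfl, by omega⟩
      · rintro ⟨j, hj, h1, h2⟩; omega
    rw [hunion, measure_biUnion_finset]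
    · have hterm : ∀ j ∈ Finset.range (k+1),
          μ ({ω | Sfn X n ω = j} ∩ {ω | Yfn X n ω = k - j})
          = ENNReal.ofReal (gFn n j * cwFn (k - j)) := by
        intro j _
        have h1 : {ω | Sfn X n ω = j} = (∑ l ∈ Finset.range n, Yfn X l) ⁻¹' {j} := by
          ext ω; simp [hSY ω]
        have h2 : {ω | Yfn X n ω = k - j} = (Yfn X n) ⁻¹' {(k - j : ℕ)} := rfl
        rw [h1, h2, hindSY.measure_inter_preimage_eq_mul _ _ (natSet_meas _) (natSet_meas _),
          ← h1, ← h2, ih, hYdist n (k - j),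
          ← ENNReal.ofReal_mul (gFn_nonneg n j)]
      rw [Finset.sum_congr rfl hterm, ← ENNReal.ofReal_sum_of_nonneg
        (fun j _ => mul_nonneg (gFn_nonneg n j) (cwFn_nonneg (k - j))), gFn_succ]
    · intro a ha b hb hab
      simp only [Function.onFun]
      apply Set.disjoint_left.2
      rintro ω ⟨h1, _⟩ ⟨h3, _⟩
      exact hab (h1 ▸ h3 ▸ rfl)
    · intro j _
      have e1 : {ω | Sfn X n ω = j} = Sfn X n ⁻¹' {j} := rfl
      have e2 : {ω | Yfn X n ω = k - j} = Yfn X n ⁻¹' {k - j} := rfl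
      rw [e1, e2]
      exact ((Sfn_meas hX n) (natSet_meas _)).inter ((hYmeas n) (natSet_meas _))

lemma Sfn_le_dist (hprob : IsProbabilityMeasure μ) (hX : ∀ i, Measurable (X i))
    (hind : iIndepFun X μ)
    (hdist : ∀ i n, μ {ω | X i ω = n} = ENNReal.ofReal (catMass (1/2 - 0) n))
    (n L : ℕ) : μ {ω | Sfn X n ω ≤ L} = ENNReal.ofReal (RFn L n) := by
  have hunion : {ω | Sfn X n ω ≤ L} = ⋃ k ∈ Finset.range (L+1), {ω | Sfn X n ω = k} := by
    ext ω
    simp only [Set.mem_setOf_eq, Set.mem_iUnion, Finset.mem_range]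
    exact ⟨fun h => ⟨Sfn X n ω, by omega, rfl⟩, fun ⟨k, hk, h⟩ => by omega⟩
  rw [hunion, measure_biUnion_finset]
  · rw [Finset.sum_congr rfl (fun k _ => Sfn_dist hprob hX hind hdist n k),
      ← ENNReal.ofReal_sum_of_nonneg (fun k _ => gFn_nonneg n k)]
    rfl
  · intro a _ b _ hab
    simp only [Function.onFun]
    apply Set.disjoint_left.2
    rintro ω h1 h3
    exact hab (h1 ▸ h3 ▸ rfl)
  · intro k _
    have e1 : {ω | Sfn X n ω = k} = Sfn X n ⁻¹' {k} := rfl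
    rw [e1]
    exact (Sfn_meas hX n) (natSet_meas _)


lemma Sfn_mono (ω : Ω) : Monotone (fun n => Sfn X n ω) := by
  intro a b hab
  exact Finset.sum_le_sum_of_subset (Finset.range_subset_range.2 hab)

lemma Sfn_ge (ω : Ω) (n : ℕ) : n ≤ Sfn X n ω := by
  calc n = ∑ _i ∈ Finset.range n, 1 := by simp
    _ ≤ Sfn X n ω := Finset.sum_le_sum fun i _ => by omega

lemma renCount_eq_iff (L n : ℕ) (ω : Ω) :
    renCount X L ω = n ↔ (Sfn X n ω ≤ L ∧ L < Sfn X (n+1) ω) := by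
  have key : ∀ m : ℕ, Sfn X m ω ≤ L → L < Sfn X (m+1) ω → renCount X L ω = m := by
    intro m h1 h2
    have hset : {k : ℕ | 1 ≤ k ∧ ∑ i ∈ Finset.range k, (2 * X i ω + 1) ≤ L}
        = ↑(Finset.Icc 1 m) := by
      ext k
      simp only [Set.mem_setOf_eq, Finset.coe_Icc, Set.mem_Icc]
      constructor
      · rintro ⟨hk1, hk2⟩
        refine ⟨hk1, ?_⟩
        by_contra h
        have : Sfn X (m+1) ω ≤ Sfn X k ω := Sfn_mono ω (by omega)
        have : Sfn X k ω ≤ L := hk2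
        omega
      · rintro ⟨hk1, hk2⟩
        exact ⟨hk1, le_trans (Sfn_mono ω hk2) h1⟩
    rw [renCount, hset, Set.ncard_coe_finset, Nat.card_Icc]
    omega
  constructor
  · intro h
    -- find the switching point
    set P : ℕ → Prop := fun k => Sfn X k ω ≤ L with hP
    have hP0 : P 0 := by simp [hP, Sfn]
    have hPtop : ¬ P (L + 1) := by
      simp only [hP, not_le]
      have := Sfn_ge (X := X) ω (L + 1)
      omega
    have hex : ∃ m, P m ∧ ¬ P (m + 1) := by
      by_contra hc
      push_neg at hc
      have hall : ∀ m, P m := by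
        intro m; induction m with
        | zero => exact hP0
        | succ m ih => exact hc m ih
      exact hPtop (hall (L+1))
    obtain ⟨m, hm1, hm2⟩ := hex
    have := key m hm1 (by simpa [hP, not_le] using hm2)
    rw [this] at h
    subst h
    exact ⟨hm1, by simpa [hP, not_le] using hm2⟩
  · rintro ⟨h1, h2⟩
    exact key n h1 h2

lemma renCount_set_eq (L n : ℕ) :
    {ω | renCount X L ω = n} = {ω | Sfn X n ω ≤ L} \ {ω | Sfn X (n+1) ω ≤ L} := by
  ext ω
  rw [Set.mem_diff]
  simp only [Set.mem_setOf_eq, renCount_eq_iff, not_le]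


/-- Running maximum of the walk with steps `ξ` up to time `L`. -/
def msupFn {Ω : Type} (ξ : ℕ → Ω → ℤ) (L : ℕ) (ω : Ω) : ℤ :=
  (Finset.range (L+1)).sup' Finset.nonempty_range_add_one (fun l => ∑ i ∈ Finset.range l, ξ i ω)

lemma msupFn_meas {Ω : Type} [MeasurableSpace Ω] {ξ : ℕ → Ω → ℤ}
    (h : ∀ i, Measurable (ξ i)) (L : ℕ) : Measurable (msupFn ξ L) := by
  have heq : msupFn ξ L = (Finset.range (L+1)).sup' Finset.nonempty_range_add_one
      (fun l ω => ∑ i ∈ Finset.range l, ξ i ω) := by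
    funext ω; rw [msupFn, Finset.sup'_apply]
  rw [heq]
  exact Finset.measurable_sup' _ fun l _ => Finset.measurable_sum _ fun i _ => h i

lemma iIndepFun_shift {Ω : Type} [MeasurableSpace Ω] {μ : Measure Ω} {β : Type}
    [MeasurableSpace β] {f : ℕ → Ω → β}
    (h : iIndepFun f μ) :
    iIndepFun (fun i => f (i+1)) μ := by
  rw [iIndepFun_iff_measure_inter_preimage_eq_mul] at h ⊢
  intro S sets hsets
  have hinj : ∀ a ∈ S, ∀ b ∈ S, a + 1 = b + 1 → a = b := by omega
  have key := h (S.image (· + 1)) (sets := fun j => sets (j - 1)) ?_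
  · have h1 : (⋂ j ∈ S.image (· + 1), f j ⁻¹' sets (j - 1))
        = ⋂ i ∈ S, (fun ω => f (i+1) ω) ⁻¹' sets i := by
      ext ω
      simp only [Set.mem_iInter, Finset.mem_image]
      constructor
      · intro hh i hi
        have := hh (i+1) ⟨i, hi, rfl⟩
        simpa using this
      · rintro hh j ⟨i, hi, rfl⟩
        simpa using hh i hi
    have h2 : (∏ j ∈ S.image (· + 1), μ (f j ⁻¹' sets (j - 1)))
        = ∏ i ∈ S, μ ((fun ω => f (i+1) ω) ⁻¹' sets i) := by
      rw [Finset.prod_image hinj]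
      exact Finset.prod_congr rfl fun i _ => by simp
    rw [← h1, ← h2]
    exact key
  · intro j hj
    rw [Finset.mem_image] at hj
    obtain ⟨i, hi, rfl⟩ := hj
    simpa using hsets i hi

lemma srw_max_dist : ∀ (L : ℕ) (Ω : Type) (mΩ : MeasurableSpace Ω) (μ : Measure Ω)
    (_hμ : IsProbabilityMeasure μ) (ξ : ℕ → Ω → ℤ) (_hm : ∀ i, Measurable (ξ i))
    (_hi : iIndepFun ξ μ)
    (_hd : ∀ i, μ {ω | ξ i ω = 1} = 1/2 ∧ μ {ω | ξ i ω = -1} = 1/2) (n : ℕ),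
    μ {ω | (n:ℤ) ≤ msupFn ξ L ω} = ENNReal.ofReal (RFn L n) := by
  intro L
  induction L with
  | zero =>
    intro Ω mΩ μ hμ ξ hm hi hd n
    have h0 : ∀ ω, msupFn ξ 0 ω = 0 := by
      intro ω; simp [msupFn, Finset.range_one]
    rcases n with _ | n
    · have : {ω | ((0:ℕ):ℤ) ≤ msupFn ξ 0 ω} = Set.univ := by
        ext ω; simp [h0]
      rw [this, measure_univ, RFn_zero_left]; simp
    · have : {ω | ((n+1:ℕ):ℤ) ≤ msupFn ξ 0 ω} = ∅ := by
        ext ω; simp only [Set.mem_setOf_eq, Set.mem_empty_iff_false, iff_false, not_le, h0]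
        push_cast; omega
      rw [this, measure_empty, RFn_zero_left, if_neg (Nat.succ_ne_zero n)]; simp
  | succ L IH =>
    intro Ω mΩ μ hμ ξ hm hi hd n
    rcases n with _ | n
    · have : {ω | ((0:ℕ):ℤ) ≤ msupFn ξ (L+1) ω} = Set.univ := by
        ext ω
        simp only [Set.mem_setOf_eq, Set.mem_univ, iff_true, Nat.cast_zero]
        have hb := Finset.le_sup' (f := fun l => ∑ i ∈ Finset.range l, ξ i ω)
          (b := 0) (Finset.mem_range.2 (Nat.succ_pos (L+1)))
        simpa only [msupFn, Finset.sum_range_zero] using hb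
      rw [this, measure_univ, RFn_zero_right]; simp
    · -- shifted family
      set ξ' : ℕ → Ω → ℤ := fun i => ξ (i+1) with hξ'def
      have hm' : ∀ i, Measurable (ξ' i) := fun i => hm (i+1)
      have hi' : iIndepFun ξ' μ := iIndepFun_shift hi
      have hd' : ∀ i, μ {ω | ξ' i ω = 1} = 1/2 ∧ μ {ω | ξ' i ω = -1} = 1/2 :=
        fun i => hd (i+1)
      have hB : ∀ m : ℕ, μ {ω | (m:ℤ) ≤ msupFn ξ' L ω} = ENNReal.ofReal (RFn L m) :=
        fun m => IH Ω mΩ μ hμ ξ' hm' hi' hd' m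
      have hsum : ∀ (ω : Ω) (l : ℕ), (∑ i ∈ Finset.range (l+1), ξ i ω)
          = ξ 0 ω + ∑ i ∈ Finset.range l, ξ' i ω := by
        intro ω l
        rw [Finset.sum_range_succ' (fun i => ξ i ω)]
        ring
      -- set identities
      have hEA : ∀ (c : ℤ) (m : ℕ), ((m:ℤ) = (n:ℤ) + 1 - c) →
          {ω | ((n+1:ℕ):ℤ) ≤ msupFn ξ (L+1) ω} ∩ {ω | ξ 0 ω = c}
          = (ξ 0 ⁻¹' {c}) ∩ (msupFn ξ' L ⁻¹' Set.Ici (m:ℤ)) := by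
        intro c m hc
        ext ω
        simp only [Set.mem_inter_iff, Set.mem_setOf_eq, Set.mem_preimage,
          Set.mem_singleton_iff, Set.mem_Ici]
        constructor
        · rintro ⟨hle, h0⟩
          refine ⟨h0, ?_⟩
          rw [msupFn, Finset.le_sup'_iff] at hle
          obtain ⟨l, hl, hwl⟩ := hle
          rcases l with _ | l'
          · simp only [Finset.range_zero, Finset.sum_empty] at hwl
            push_cast at hwl; omega
          · rw [Finset.mem_range] at hl
            rw [hsum ω l', h0] at hwl
            rw [msupFn, Finset.le_sup'_iff]
            refine ⟨l', Finset.mem_range.2 (by omega), ?_⟩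
            push_cast at hwl ⊢; omega
        · rintro ⟨h0, hge⟩
          refine ⟨?_, h0⟩
          rw [msupFn, Finset.le_sup'_iff] at hge ⊢
          obtain ⟨l, hl, hwl⟩ := hge
          rw [Finset.mem_range] at hl
          refine ⟨l+1, Finset.mem_range.2 (by omega), ?_⟩
          rw [hsum ω l, h0]
          push_cast at hwl ⊢; omega
      -- independence of ξ 0 and shifted running max
      have hT : Disjoint ({0} : Finset ℕ) (Finset.Icc 1 (L+1)) := by
        rw [Finset.disjoint_left]
        intro a ha hb
        rw [Finset.mem_singleton] at ha
        rw [Finset.mem_Icc] at hb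
        omega
      have hIF := hi.indepFun_finset {0} (Finset.Icc 1 (L+1)) hT hm
      set φ : (({0} : Finset ℕ) → ℤ) → ℤ := fun v => v ⟨0, Finset.mem_singleton_self 0⟩ with hφdef
      set ψ : (((Finset.Icc 1 (L+1)) : Finset ℕ) → ℤ) → ℤ := fun v =>
        (Finset.range (L+1)).sup' Finset.nonempty_range_add_one
          (fun l => ∑ i ∈ Finset.range l,
            if h : i + 1 ∈ Finset.Icc 1 (L+1) then v ⟨i+1, h⟩ else 0) with hψdef
      have hφ : Measurable φ := measurable_pi_apply _
      have hψ : Measurable ψ := by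
        have heq : ψ = (Finset.range (L+1)).sup' Finset.nonempty_range_add_one
            (fun l v => ∑ i ∈ Finset.range l,
              if h : i + 1 ∈ Finset.Icc 1 (L+1) then v ⟨i+1, h⟩ else 0) := by
          funext v; rw [hψdef, Finset.sup'_apply]
        rw [heq]
        refine Finset.measurable_sup' _ fun l _ => Finset.measurable_sum _ fun i _ => ?_
        split_ifs with h
        · exact measurable_pi_apply _
        · exact measurable_const
      have hIndep : IndepFun (ξ 0) (msupFn ξ' L) μ := by
        have hcomp := hIF.comp hφ hψ
        have h1 : (φ ∘ fun a (i : ({0} : Finset ℕ)) => ξ i a) = ξ 0 := rfl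
        have h2 : (ψ ∘ fun a (i : ((Finset.Icc 1 (L+1)) : Finset ℕ)) => ξ i a)
            = msupFn ξ' L := by
          funext ω
          simp only [Function.comp_apply, hψdef, msupFn]
          refine Finset.sup'_congr _ rfl fun l hl => ?_
          refine Finset.sum_congr rfl fun i hi => ?_
          rw [Finset.mem_range] at hl hi
          rw [dif_pos (Finset.mem_Icc.2 (by omega))]
        rw [h1, h2] at hcomp
        exact hcomp
      have hmul : ∀ (c : ℤ) (m : ℕ),
          μ ((ξ 0 ⁻¹' {c}) ∩ (msupFn ξ' L ⁻¹' Set.Ici (m:ℤ)))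
          = μ (ξ 0 ⁻¹' {c}) * ENNReal.ofReal (RFn L m) := by
        intro c m
        rw [hIndep.measure_inter_preimage_eq_mul _ _ (intSet_meas _) (intSet_meas _)]
        congr 1
        exact hB m
      -- additivity over the first step
      set E := {ω | ((n+1:ℕ):ℤ) ≤ msupFn ξ (L+1) ω} with hEdef
      have hA1 : MeasurableSet {ω | ξ 0 ω = (1:ℤ)} := (hm 0) (intSet_meas {1})
      have hA2 : MeasurableSet {ω | ξ 0 ω = (-1:ℤ)} := (hm 0) (intSet_meas {-1})
      have hsplit1 : μ E = μ (E ∩ {ω | ξ 0 ω = (1:ℤ)}) + μ (E \ {ω | ξ 0 ω = (1:ℤ)}) :=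
        (measure_inter_add_diff E hA1).symm
      have hsplit2 : μ (E \ {ω | ξ 0 ω = (1:ℤ)})
          = μ ((E \ {ω | ξ 0 ω = (1:ℤ)}) ∩ {ω | ξ 0 ω = (-1:ℤ)})
            + μ ((E \ {ω | ξ 0 ω = (1:ℤ)}) \ {ω | ξ 0 ω = (-1:ℤ)}) :=
        (measure_inter_add_diff _ hA2).symm
      have he1 : (E \ {ω | ξ 0 ω = (1:ℤ)}) ∩ {ω | ξ 0 ω = (-1:ℤ)}
          = E ∩ {ω | ξ 0 ω = (-1:ℤ)} := by
        ext ω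
        simp only [Set.mem_inter_iff, Set.mem_diff, Set.mem_setOf_eq]
        constructor
        · rintro ⟨⟨h1, _⟩, h2⟩; exact ⟨h1, h2⟩
        · rintro ⟨h1, h2⟩; exact ⟨⟨h1, by rw [h2]; omega⟩, h2⟩
      have hnull : μ ((E \ {ω | ξ 0 ω = (1:ℤ)}) \ {ω | ξ 0 ω = (-1:ℤ)}) = 0 := by
        have hsub : (E \ {ω | ξ 0 ω = (1:ℤ)}) \ {ω | ξ 0 ω = (-1:ℤ)}
            ⊆ ({ω | ξ 0 ω = (1:ℤ)} ∪ {ω | ξ 0 ω = (-1:ℤ)})ᶜ := by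
          rintro ω ⟨⟨_, h1⟩, h2⟩
          simp only [Set.mem_compl_iff, Set.mem_union, Set.mem_setOf_eq]
          tauto
        refine measure_mono_null hsub ?_
        have hdisj : Disjoint {ω | ξ 0 ω = (1:ℤ)} {ω | ξ 0 ω = (-1:ℤ)} := by
          rw [Set.disjoint_left]
          intro ω h1 h2
          simp only [Set.mem_setOf_eq] at h1 h2
          omega
        rw [measure_compl (hA1.union hA2) (measure_ne_top μ _),
          measure_union hdisj hA2, (hd 0).1, (hd 0).2, measure_univ]
        rw [ENNReal.add_halves, tsub_self]
      have hhalf : (1/2 : ENNReal) = ENNReal.ofReal (1/2) := by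
        rw [ENNReal.ofReal_div_of_pos (by norm_num), ENNReal.ofReal_one,
          ENNReal.ofReal_ofNat]
      have step : μ E = ENNReal.ofReal (1/2 * RFn L n) + ENNReal.ofReal (1/2 * RFn L (n+2)) := by
        rw [hsplit1, hsplit2, he1, hnull, add_zero]
        have hc1' : ((n:ℕ):ℤ) = (n:ℤ) + 1 - 1 := by push_cast; ring
        have hc2' : (((n+2:ℕ)):ℤ) = (n:ℤ) + 1 - (-1) := by push_cast; ring
        rw [hEA 1 n hc1', hEA (-1) (n+2) hc2']
        rw [hmul, hmul]
        have hc1 : μ (ξ 0 ⁻¹' {(1:ℤ)}) = 1/2 := (hd 0).1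
        have hc2 : μ (ξ 0 ⁻¹' {(-1:ℤ)}) = 1/2 := (hd 0).2
        rw [hc1, hc2, hhalf, ← ENNReal.ofReal_mul (by norm_num), ← ENNReal.ofReal_mul (by norm_num)]
      rw [step, ← ENNReal.ofReal_add (by have := RFn_nonneg L n; positivity) (by have := RFn_nonneg L (n+2); positivity)]
      congr 1
      have := RFn_step L n
      linarith

/-- **Renewal count equals running maximum of SRW in distribution.** If `N̂⁰(L)` is the
critical renewal count and `M_L = max_{0 ≤ l ≤ L} W_l` is the running maximum of a
simple symmetric random walk, then `P(N̂⁰(L) = n) = P(M_L = n)` for all `n ∈ ℕ`. -/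
theorem renewal_count_eq_max_srw_in_dist
    (Ω₁ : Type) [MeasurableSpace Ω₁] (μ₁ : MeasureTheory.Measure Ω₁)
    (X : ℕ → Ω₁ → ℕ) (hX : IIDCat μ₁ 0 X)
    (Ω₂ : Type) [MeasurableSpace Ω₂] (μ₂ : MeasureTheory.Measure Ω₂)
    (hμ₂ : IsProbabilityMeasure μ₂) (ξ : ℕ → Ω₂ → ℤ)
    (hmeas : ∀ i, Measurable (ξ i))
    (hindep : iIndepFun ξ μ₂)
    (hdist : ∀ i, μ₂ {ω | ξ i ω = 1} = 1/2 ∧ μ₂ {ω | ξ i ω = -1} = 1/2)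
    (L : ℕ) (hL : 1 ≤ L) (n : ℕ) :
    μ₁ {ω | renCount X L ω = n} =
      μ₂ {ω | (Finset.range (L + 1)).sup' Finset.nonempty_range_add_one
          (fun l => ∑ i ∈ Finset.range l, ξ i ω) = (n : ℤ)} := by
  obtain ⟨hprob, hXmeas, hXind, hXdist⟩ := hX
  haveI := hprob
  haveI := hμ₂
  -- LHS
  have hsub1 : {ω | Sfn X (n+1) ω ≤ L} ⊆ {ω | Sfn X n ω ≤ L} := by
    intro ω h
    exact le_trans (Sfn_mono ω (Nat.le_succ n)) h
  have hmeas1 : MeasurableSet {ω | Sfn X (n+1) ω ≤ L} := by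
    have e : {ω | Sfn X (n+1) ω ≤ L} = Sfn X (n+1) ⁻¹' Set.Iic L := rfl
    rw [e]; exact (Sfn_meas hXmeas (n+1)) (natSet_meas _)
  have hLHS : μ₁ {ω | renCount X L ω = n}
      = ENNReal.ofReal (RFn L n) - ENNReal.ofReal (RFn L (n+1)) := by
    rw [renCount_set_eq, measure_diff hsub1 hmeas1.nullMeasurableSet (measure_ne_top μ₁ _),
      Sfn_le_dist hprob hXmeas hXind hXdist, Sfn_le_dist hprob hXmeas hXind hXdist]
  -- RHS
  have hset2 : {ω | (Finset.range (L + 1)).sup' Finset.nonempty_range_add_one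
          (fun l => ∑ i ∈ Finset.range l, ξ i ω) = (n : ℤ)}
      = {ω | (n:ℤ) ≤ msupFn ξ L ω} \ {ω | ((n+1:ℕ):ℤ) ≤ msupFn ξ L ω} := by
    ext ω
    simp only [Set.mem_setOf_eq, Set.mem_diff, not_le]
    have : (Finset.range (L + 1)).sup' Finset.nonempty_range_add_one
        (fun l => ∑ i ∈ Finset.range l, ξ i ω) = msupFn ξ L ω := rfl
    rw [this]
    push_cast
    omega
  have hsub2 : {ω | ((n+1:ℕ):ℤ) ≤ msupFn ξ L ω} ⊆ {ω | (n:ℤ) ≤ msupFn ξ L ω} := by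
    intro ω h
    simp only [Set.mem_setOf_eq] at h ⊢
    push_cast at h
    omega
  have hmeas2 : MeasurableSet {ω | ((n+1:ℕ):ℤ) ≤ msupFn ξ L ω} := by
    have e : {ω | ((n+1:ℕ):ℤ) ≤ msupFn ξ L ω} = msupFn ξ L ⁻¹' Set.Ici ((n+1:ℕ):ℤ) := rfl
    rw [e]; exact (msupFn_meas hmeas L) (intSet_meas _)
  have hRHS : μ₂ {ω | (Finset.range (L + 1)).sup' Finset.nonempty_range_add_one
          (fun l => ∑ i ∈ Finset.range l, ξ i ω) = (n : ℤ)}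
      = ENNReal.ofReal (RFn L n) - ENNReal.ofReal (RFn L (n+1)) := by
    rw [hset2, measure_diff hsub2 hmeas2.nullMeasurableSet (measure_ne_top μ₂ _),
      srw_max_dist L Ω₂ _ μ₂ hμ₂ ξ hmeas hindep hdist n,
      srw_max_dist L Ω₂ _ μ₂ hμ₂ ξ hmeas hindep hdist (n+1)]
  rw [hLHS, hRHS]
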